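/- For the transversal gauge A_j(x,y) = -∑_k ∫_0^1 s (x_k - y_k) B_{jk}(y + s(x-y)) ds with B_{jk} bounded smooth, the identity A_j(x,0) - A_j(x,y) = ∂_{x_j} φ(x,y) holds, where φ(x,y) = ∫_{Γ_{y,x}} A(·,0). -/

import Mathlib

noncomputable section
open MeasureTheory Real intervalIntegral

/-- The transversal gauge vector potential based at `y`. -/
def Apot {d : ℕ} (B : Fin d → Fin d → (Fin d → ℝ) → ℝ) (j : Fin d)
    (x y : Fin d → ℝ) : ℝ :=
  -∑ k, ∫ s in (0 : ℝ)..1, s * (x k - y k) * B j k (y + s • (x - y))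

/-- The circulation of `A(·,0)` along the straight segment from `y` to `x`. -/
def linePhi {d : ℕ} (B : Fin d → Fin d → (Fin d → ℝ) → ℝ) (x y : Fin d → ℝ) : ℝ :=
  ∫ t in (0 : ℝ)..1, ∑ j, (x j - y j) * Apot B j (y + t • (x - y)) 0

namespace Stmt3Aux

variable {d : ℕ}

/-- Evaluation of a continuous linear functional via coordinates. -/
lemma clm_eval (L : (Fin d → ℝ) →L[ℝ] ℝ) (v : Fin d → ℝ) :
    L v = ∑ k, v k * L (Pi.single k 1) := by
  have hv : v = ∑ k, v k • (Pi.single k 1 : Fin d → ℝ) := by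
    funext m
    simp [Pi.single_apply]
  calc L v = L (∑ k, v k • (Pi.single k 1 : Fin d → ℝ)) := by rw [← hv]
    _ = ∑ k, v k * L (Pi.single k 1) := by
        rw [map_sum]; simp [smul_eq_mul]

/-- Differentiation under the interval integral for jointly continuous data. -/
lemma param_hasFDerivAt {F : (Fin d → ℝ) → ℝ → ℝ}
    {F' : (Fin d → ℝ) → ℝ → ((Fin d → ℝ) →L[ℝ] ℝ)} {x₀ : Fin d → ℝ}
    (hF : Continuous fun p : (Fin d → ℝ) × ℝ => F p.1 p.2)
    (hF' : Continuous fun p : (Fin d → ℝ) × ℝ => F' p.1 p.2)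
    (hd : ∀ x t, HasFDerivAt (fun x' => F x' t) (F' x t) x) :
    HasFDerivAt (fun x => ∫ t in (0:ℝ)..1, F x t) (∫ t in (0:ℝ)..1, F' x₀ t) x₀ := by
  obtain ⟨C, hC⟩ :=
    ((isCompact_closedBall x₀ 1).prod (isCompact_Icc (a := (0:ℝ)) (b := 1))).exists_bound_of_continuousOn
      hF'.continuousOn
  apply intervalIntegral.hasFDerivAt_integral_of_dominated_of_fderiv_le (s := Metric.ball x₀ 1)
      (bound := fun _ => C) (Metric.ball_mem_nhds x₀ one_pos)
  · exact Filter.Eventually.of_forall fun x =>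
      (hF.comp (continuous_const.prodMk continuous_id)).aestronglyMeasurable
  · exact ((hF.comp (continuous_const.prodMk continuous_id)) :
      Continuous fun t => F x₀ t).intervalIntegrable 0 1
  · exact ((hF'.comp (continuous_const.prodMk continuous_id)) :
      Continuous fun t => F' x₀ t).aestronglyMeasurable
  · refine Filter.Eventually.of_forall fun t ht x hx => hC (x, t) ?_
    refine ⟨Metric.ball_subset_closedBall hx, Set.Ioc_subset_Icc_self ?_⟩
    simpa [Set.uIoc_of_le (zero_le_one (α := ℝ))] using ht
  · exact intervalIntegrable_const
  · exact Filter.Eventually.of_forall fun t _ x _ => hd x t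

section WithB

variable (B : Fin d → Fin d → (Fin d → ℝ) → ℝ)

/-- The derivative (in `z`) of the integrand of `Apot B j z 0`. -/
def D1 (j : Fin d) (z : Fin d → ℝ) (s : ℝ) : (Fin d → ℝ) →L[ℝ] ℝ :=
  -∑ k, ((s * z k) • ((fderiv ℝ (B j k) (s • z)).comp
      (s • ContinuousLinearMap.id ℝ (Fin d → ℝ)))
    + (B j k (s • z)) • (s • (ContinuousLinearMap.proj k :
        (Fin d → ℝ) →L[ℝ] ℝ)))

/-- The derivative of `z ↦ Apot B j z 0`. -/
def Da (j : Fin d) (z : Fin d → ℝ) : (Fin d → ℝ) →L[ℝ] ℝ :=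
  ∫ s in (0:ℝ)..1, D1 B j z s

variable (hsmooth : ∀ j k, ContDiff ℝ (⊤ : ℕ∞) (B j k))

section Smooth
include hsmooth

lemma hBc (j k : Fin d) : Continuous (B j k) := (hsmooth j k).continuous

lemma hBd (j k : Fin d) : Continuous (fderiv ℝ (B j k)) :=
  (hsmooth j k).continuous_fderiv (by simp)

lemma hBfd (j k : Fin d) (w : Fin d → ℝ) :
    HasFDerivAt (B j k) (fderiv ℝ (B j k) w) w :=
  (((hsmooth j k).differentiable (by simp)) w).hasFDerivAt

/-- Joint continuity of the integrand of `Apot · 0`. -/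
lemma hF1cont (j : Fin d) :
    Continuous fun p : (Fin d → ℝ) × ℝ => -∑ k, p.2 * p.1 k * B j k (p.2 • p.1) := by
  refine Continuous.neg ?_
  refine continuous_finset_sum _ fun k _ => ?_
  exact (continuous_snd.mul ((continuous_apply k).comp continuous_fst)).mul
    ((hBc B hsmooth j k).comp (continuous_snd.smul continuous_fst))

/-- Joint continuity of `D1`. -/
lemma hD1cont (j : Fin d) :
    Continuous fun p : (Fin d → ℝ) × ℝ => D1 B j p.1 p.2 := by
  refine Continuous.neg ?_
  refine continuous_finset_sum _ fun k _ => ?_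
  have hsm : Continuous fun p : (Fin d → ℝ) × ℝ => p.2 • p.1 :=
    continuous_snd.smul continuous_fst
  refine Continuous.add ?_ ?_
  · refine Continuous.smul
      (continuous_snd.mul ((continuous_apply k).comp continuous_fst)) ?_
    exact Continuous.clm_comp ((hBd B hsmooth j k).comp hsm)
      (continuous_snd.smul continuous_const)
  · exact Continuous.smul ((hBc B hsmooth j k).comp hsm)
      (continuous_snd.smul continuous_const)

/-- Pointwise differentiability (in `z`) of the integrand. -/
lemma hD1deriv (j : Fin d) (z : Fin d → ℝ) (s : ℝ) :
    HasFDerivAt (fun z' => -∑ k, s * z' k * B j k (s • z')) (D1 B j z s) z := by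
  refine HasFDerivAt.neg ?_
  refine HasFDerivAt.fun_sum fun k _ => ?_
  have h1 : HasFDerivAt (fun z' : Fin d → ℝ => s * z' k)
      (s • (ContinuousLinearMap.proj k : (Fin d → ℝ) →L[ℝ] ℝ)) z :=
    (ContinuousLinearMap.proj k : (Fin d → ℝ) →L[ℝ] ℝ).hasFDerivAt.const_mul s
  have hin : HasFDerivAt (fun z' : Fin d → ℝ => s • z')
      (s • ContinuousLinearMap.id ℝ (Fin d → ℝ)) z :=
    (hasFDerivAt_id z).const_smul s
  have h2 : HasFDerivAt (fun z' : Fin d → ℝ => B j k (s • z'))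
      ((fderiv ℝ (B j k) (s • z)).comp (s • ContinuousLinearMap.id ℝ (Fin d → ℝ))) z :=
    (hBfd B hsmooth j k (s • z)).comp z hin
  exact h1.mul h2

/-- Rewriting `Apot B j z 0` as a single interval integral. -/
lemma apot_eq (j : Fin d) (z : Fin d → ℝ) :
    Apot B j z 0 = ∫ s in (0:ℝ)..1, -∑ k, s * z k * B j k (s • z) := by
  have hint : ∀ k : Fin d, IntervalIntegrable
      (fun s : ℝ => s * z k * B j k (s • z)) volume 0 1 := by
    intro k
    exact ((continuous_id.mul continuous_const).mul
      ((hBc B hsmooth j k).comp (continuous_id.smul continuous_const))).intervalIntegrable 0 1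
  rw [intervalIntegral.integral_neg,
    intervalIntegral.integral_finset_sum (fun k _ => hint k)]
  unfold Apot
  congr 1
  refine Finset.sum_congr rfl fun k _ => ?_
  congr 1
  funext s
  simp

/-- `z ↦ Apot B j z 0` is differentiable with derivative `Da`. -/
lemma hDa (j : Fin d) (z : Fin d → ℝ) :
    HasFDerivAt (fun w => Apot B j w 0) (Da B j z) z := by
  have h := param_hasFDerivAt (F := fun w s => -∑ k, s * w k * B j k (s • w))
    (F' := fun w s => D1 B j w s) (x₀ := z)
    (hF1cont B hsmooth j) (hD1cont B hsmooth j)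
    (fun w s => hD1deriv B hsmooth j w s)
  have he : (fun w => Apot B j w 0) =
      fun w => ∫ s in (0:ℝ)..1, -∑ k, s * w k * B j k (s • w) :=
    funext fun w => apot_eq B hsmooth j w
  rw [he]
  exact h

/-- Continuity of `Da` in the base point. -/
lemma hDacont (j : Fin d) : Continuous fun p : (Fin d → ℝ) × ℝ => Da B j (p.1) := by
  have : Continuous fun z : Fin d → ℝ => Da B j z := by
    exact intervalIntegral.continuous_parametric_intervalIntegral_of_continuous'
      (f := fun z s => D1 B j z s) (hD1cont B hsmooth j) 0 1
  exact this.comp continuous_fst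

lemma hDacont' (j : Fin d) : Continuous fun z : Fin d → ℝ => Da B j z :=
  intervalIntegral.continuous_parametric_intervalIntegral_of_continuous'
    (f := fun z s => D1 B j z s) (hD1cont B hsmooth j) 0 1

lemma haCont (j : Fin d) : Continuous fun z : Fin d → ℝ => Apot B j z 0 := by
  have : Continuous fun z : Fin d → ℝ =>
      ∫ s in (0:ℝ)..1, -∑ k, s * z k * B j k (s • z) :=
    intervalIntegral.continuous_parametric_intervalIntegral_of_continuous'
      (f := fun z s => -∑ k, s * z k * B j k (s • z)) (hF1cont B hsmooth j) 0 1
  have he : (fun z : Fin d → ℝ => Apot B j z 0) =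
      fun z => ∫ s in (0:ℝ)..1, -∑ k, s * z k * B j k (s • z) :=
    funext fun z => apot_eq B hsmooth j z
  rw [he]; exact this

end Smooth

lemma fderiv_anti (hanti : ∀ j k x, B j k x = -B k j x) (i k : Fin d) (w : Fin d → ℝ) :
    fderiv ℝ (B k i) w = -fderiv ℝ (B i k) w := by
  have h : B k i = fun x => -B i k x := funext fun x => hanti k i x
  rw [h, fderiv_fun_neg]

section Smooth
include hsmooth

/-- `∂_j B_{ik} - ∂_i B_{jk} = ∂_k B_{ij}` from closedness and antisymmetry. -/
lemma hkey (hanti : ∀ j k x, B j k x = -B k j x)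
    (hclosed : ∀ j k l x, fderiv ℝ (B k l) x (Pi.single j 1)
      + fderiv ℝ (B l j) x (Pi.single k 1) + fderiv ℝ (B j k) x (Pi.single l 1) = 0)
    (i j k : Fin d) (w : Fin d → ℝ) :
    fderiv ℝ (B i k) w (Pi.single j 1) - fderiv ℝ (B j k) w (Pi.single i 1)
      = fderiv ℝ (B i j) w (Pi.single k 1) := by
  have h := hclosed j k i w
  -- h : ∂_j B k i + ∂_k B i j + ∂_i B j k = 0
  have h1 : fderiv ℝ (B k i) w (Pi.single j 1) = -(fderiv ℝ (B i k) w (Pi.single j 1)) := by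
    rw [fderiv_anti B hanti i k w]; rfl
  rw [h1] at h
  linarith

/-- Pointwise antisymmetrized integrand identity. -/
lemma D1_diff_apply (hanti : ∀ j k x, B j k x = -B k j x)
    (hclosed : ∀ j k l x, fderiv ℝ (B k l) x (Pi.single j 1)
      + fderiv ℝ (B l j) x (Pi.single k 1) + fderiv ℝ (B j k) x (Pi.single l 1) = 0)
    (i j : Fin d) (z : Fin d → ℝ) (s : ℝ) :
    D1 B i z s (Pi.single j 1) - D1 B j z s (Pi.single i 1)
      = -(2 * s * B i j (s • z) + s ^ 2 * (fderiv ℝ (B i j) (s • z)) z) := by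
  simp only [D1, ContinuousLinearMap.neg_apply, ContinuousLinearMap.sum_apply,
    ContinuousLinearMap.add_apply, ContinuousLinearMap.smul_apply,
    ContinuousLinearMap.coe_comp', Function.comp_apply, ContinuousLinearMap.id_apply,
    ContinuousLinearMap.proj_apply, Pi.smul_apply, smul_eq_mul, _root_.map_smul]
  rw [neg_sub_neg, ← Finset.sum_sub_distrib]
  refine Eq.trans (Finset.sum_congr rfl (fun k _ => ?_) :
    _ = ∑ k : Fin d, (-(s ^ 2 * (z k * fderiv ℝ (B i j) (s • z) (Pi.single k 1)))
      + (s * (B j k (s • z) * (Pi.single i 1 : Fin d → ℝ) k)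
        - s * (B i k (s • z) * (Pi.single j 1 : Fin d → ℝ) k)))) ?_
  · have hk := hkey B hsmooth hanti hclosed i j k (s • z)
    linear_combination (-(s ^ 2) * z k) * hk
  rw [Finset.sum_add_distrib, Finset.sum_sub_distrib]
  have e1 : ∑ k : Fin d, -(s ^ 2 * (z k * fderiv ℝ (B i j) (s • z) (Pi.single k 1)))
      = -(s ^ 2 * fderiv ℝ (B i j) (s • z) z) := by
    rw [clm_eval (fderiv ℝ (B i j) (s • z)) z, Finset.mul_sum]
    rw [Finset.sum_neg_distrib]
  have e2 : ∑ k : Fin d, s * (B j k (s • z) * (Pi.single i 1 : Fin d → ℝ) k)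
      = s * B j i (s • z) := by
    rw [Finset.sum_eq_single_of_mem i (Finset.mem_univ i)
      (fun b _ hb => by simp [Pi.single_eq_of_ne hb])]
    simp
  have e3 : ∑ k : Fin d, s * (B i k (s • z) * (Pi.single j 1 : Fin d → ℝ) k)
      = s * B i j (s • z) := by
    rw [Finset.sum_eq_single_of_mem j (Finset.mem_univ j)
      (fun b _ hb => by simp [Pi.single_eq_of_ne hb])]
    simp
  rw [e1, e2, e3, hanti j i (s • z)]
  ring

/-- FTC computation: `∫₀¹ d/ds (s² B_{ij}(sz)) ds = B_{ij}(z)`. -/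
lemma ftc_sq (i j : Fin d) (z : Fin d → ℝ) :
    (∫ s in (0:ℝ)..1, (2 * s * B i j (s • z) + s ^ 2 * (fderiv ℝ (B i j) (s • z)) z))
      = B i j z := by
  have hderiv : ∀ s ∈ Set.uIcc (0:ℝ) 1, HasDerivAt (fun u : ℝ => u ^ 2 * B i j (u • z))
      (2 * s * B i j (s • z) + s ^ 2 * (fderiv ℝ (B i j) (s • z)) z) s := by
    intro s _
    have hin : HasDerivAt (fun u : ℝ => u • z) z s := by
      simpa using (hasDerivAt_id s).smul_const z
    have h2 : HasDerivAt (fun u : ℝ => B i j (u • z)) ((fderiv ℝ (B i j) (s • z)) z) s :=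
      (hBfd B hsmooth i j (s • z)).comp_hasDerivAt s hin
    have h1 : HasDerivAt (fun u : ℝ => u ^ 2) (2 * s) s := by
      simpa using hasDerivAt_pow 2 s
    exact h1.mul h2
  have hcont : Continuous fun s : ℝ =>
      2 * s * B i j (s • z) + s ^ 2 * (fderiv ℝ (B i j) (s • z)) z := by
    refine Continuous.add ?_ ?_
    · exact (continuous_const.mul continuous_id).mul
        ((hBc B hsmooth i j).comp (continuous_id.smul continuous_const))
    · exact (continuous_id.pow 2).mul
        (((hBd B hsmooth i j).comp (continuous_id.smul continuous_const)).clm_apply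
          continuous_const)
  rw [intervalIntegral.integral_eq_sub_of_hasDerivAt hderiv (hcont.intervalIntegrable 0 1)]
  simp

/-- The curl identity: `∂_j a_i - ∂_i a_j = -B_{ij}` for the transversal gauge. -/
lemma Da_curl (hanti : ∀ j k x, B j k x = -B k j x)
    (hclosed : ∀ j k l x, fderiv ℝ (B k l) x (Pi.single j 1)
      + fderiv ℝ (B l j) x (Pi.single k 1) + fderiv ℝ (B j k) x (Pi.single l 1) = 0)
    (i j : Fin d) (z : Fin d → ℝ) :
    Da B i z (Pi.single j 1) - Da B j z (Pi.single i 1) = -(B i j z) := by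
  have hint : ∀ i' : Fin d, IntervalIntegrable (fun s => D1 B i' z s) volume 0 1 := by
    intro i'
    exact ((hD1cont B hsmooth i').comp
      (continuous_const.prodMk continuous_id)).intervalIntegrable 0 1
  have happ : ∀ (i' : Fin d) (v : Fin d → ℝ),
      Continuous fun s : ℝ => D1 B i' z s v := by
    intro i' v
    exact ((hD1cont B hsmooth i').comp
      (continuous_const.prodMk continuous_id)).clm_apply continuous_const
  rw [Da, Da, ContinuousLinearMap.intervalIntegral_apply (hint i),
    ContinuousLinearMap.intervalIntegral_apply (hint j),
    ← intervalIntegral.integral_sub ((happ i _).intervalIntegrable 0 1)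
      ((happ j _).intervalIntegrable 0 1)]
  rw [intervalIntegral.integral_congr
    (g := fun s => -(2 * s * B i j (s • z) + s ^ 2 * (fderiv ℝ (B i j) (s • z)) z))
    (fun s _ => D1_diff_apply B hsmooth hanti hclosed i j z s)]
  rw [intervalIntegral.integral_neg, ftc_sq B hsmooth i j z]

end Smooth

end WithB

end Stmt3Aux

open Stmt3Aux in
/-- `A_j(x,0) - A_j(x,y) = ∂_{x_j} φ(x,y)`. -/
theorem stmt3 {d : ℕ} (B : Fin d → Fin d → (Fin d → ℝ) → ℝ)
    (hsmooth : ∀ j k, ContDiff ℝ (⊤ : ℕ∞) (B j k))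
    (hanti : ∀ j k x, B j k x = -B k j x)
    (hclosed : ∀ j k l x, fderiv ℝ (B k l) x (Pi.single j 1)
      + fderiv ℝ (B l j) x (Pi.single k 1) + fderiv ℝ (B j k) x (Pi.single l 1) = 0)
    (hbdd : ∀ j k (n : ℕ), ∃ C, ∀ x, ‖iteratedFDeriv ℝ n (B j k) x‖ ≤ C)
    (j : Fin d) (x y : Fin d → ℝ) :
    fderiv ℝ (fun z => linePhi B z y) x (Pi.single j 1) = Apot B j x 0 - Apot B j x y := by
  classical
  have hmc : Continuous fun p : (Fin d → ℝ) × ℝ => y + p.2 • (p.1 - y) :=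
    continuous_const.add (continuous_snd.smul (continuous_fst.sub continuous_const))
  have hGcont : Continuous fun p : (Fin d → ℝ) × ℝ =>
      ∑ i, (p.1 i - y i) * Apot B i (y + p.2 • (p.1 - y)) 0 := by
    refine continuous_finset_sum _ fun i _ => ?_
    exact (((continuous_apply i).comp continuous_fst).sub continuous_const).mul
      ((haCont B hsmooth i).comp hmc)
  have hG'cont : Continuous fun p : (Fin d → ℝ) × ℝ =>
      ∑ i, ((p.1 i - y i) • ((Da B i (y + p.2 • (p.1 - y))).comp
          (p.2 • ContinuousLinearMap.id ℝ (Fin d → ℝ)))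
        + (Apot B i (y + p.2 • (p.1 - y)) 0) • (ContinuousLinearMap.proj i :
            (Fin d → ℝ) →L[ℝ] ℝ)) := by
    refine continuous_finset_sum _ fun i _ => ?_
    refine Continuous.add ?_ ?_
    · exact ((((continuous_apply i).comp continuous_fst).sub continuous_const)).smul
        (Continuous.clm_comp ((hDacont' B hsmooth i).comp hmc)
          (continuous_snd.smul continuous_const))
    · exact ((haCont B hsmooth i).comp hmc).smul continuous_const
  have hGd : ∀ (x' : Fin d → ℝ) (t : ℝ), HasFDerivAt
      (fun w => ∑ i, (w i - y i) * Apot B i (y + t • (w - y)) 0)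
      (∑ i, ((x' i - y i) • ((Da B i (y + t • (x' - y))).comp
          (t • ContinuousLinearMap.id ℝ (Fin d → ℝ)))
        + (Apot B i (y + t • (x' - y)) 0) • (ContinuousLinearMap.proj i :
            (Fin d → ℝ) →L[ℝ] ℝ))) x' := by
    intro x' t
    refine HasFDerivAt.fun_sum fun i _ => ?_
    have hc : HasFDerivAt (fun w : Fin d → ℝ => w i - y i)
        (ContinuousLinearMap.proj i : (Fin d → ℝ) →L[ℝ] ℝ) x' :=
      (ContinuousLinearMap.proj i : (Fin d → ℝ) →L[ℝ] ℝ).hasFDerivAt.sub_const (y i)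
    have hm : HasFDerivAt (fun w : Fin d → ℝ => y + t • (w - y))
        (t • ContinuousLinearMap.id ℝ (Fin d → ℝ)) x' :=
      (((hasFDerivAt_id x').sub_const y).const_smul t).const_add y
    exact hc.mul (by have h := (hDa B hsmooth i (y + t • (x' - y))).comp x' hm; exact h)
  have hmain : HasFDerivAt (fun z => linePhi B z y)
      (∫ t in (0:ℝ)..1, ∑ i, ((x i - y i) • ((Da B i (y + t • (x - y))).comp
          (t • ContinuousLinearMap.id ℝ (Fin d → ℝ)))
        + (Apot B i (y + t • (x - y)) 0) • (ContinuousLinearMap.proj i :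
            (Fin d → ℝ) →L[ℝ] ℝ))) x := by
    have h := param_hasFDerivAt
      (F := fun x' t => ∑ i, (x' i - y i) * Apot B i (y + t • (x' - y)) 0)
      (F' := fun x' t => ∑ i, ((x' i - y i) • ((Da B i (y + t • (x' - y))).comp
          (t • ContinuousLinearMap.id ℝ (Fin d → ℝ)))
        + (Apot B i (y + t • (x' - y)) 0) • (ContinuousLinearMap.proj i :
            (Fin d → ℝ) →L[ℝ] ℝ))) (x₀ := x) hGcont hG'cont hGd
    exact h
  have hintG' : IntervalIntegrable (fun t : ℝ =>
      ∑ i, ((x i - y i) • ((Da B i (y + t • (x - y))).comp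
          (t • ContinuousLinearMap.id ℝ (Fin d → ℝ)))
        + (Apot B i (y + t • (x - y)) 0) • (ContinuousLinearMap.proj i :
            (Fin d → ℝ) →L[ℝ] ℝ))) volume 0 1 :=
    ((hG'cont.comp (continuous_const.prodMk continuous_id)).intervalIntegrable 0 1)
  rw [hmain.fderiv, ContinuousLinearMap.intervalIntegral_apply hintG' (Pi.single j 1)]
  have hpt : ∀ t : ℝ, (∑ i, ((x i - y i) • ((Da B i (y + t • (x - y))).comp
          (t • ContinuousLinearMap.id ℝ (Fin d → ℝ)))
        + (Apot B i (y + t • (x - y)) 0) • (ContinuousLinearMap.proj i :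
            (Fin d → ℝ) →L[ℝ] ℝ))) (Pi.single j 1)
      = (Apot B j (y + t • (x - y)) 0 + t * (Da B j (y + t • (x - y))) (x - y))
        + ∑ i, t * ((x i - y i) * B j i (y + t • (x - y))) := by
    intro t
    set c : Fin d → ℝ := y + t • (x - y) with hc
    simp only [ContinuousLinearMap.sum_apply, ContinuousLinearMap.add_apply,
      ContinuousLinearMap.smul_apply, ContinuousLinearMap.coe_comp', Function.comp_apply,
      ContinuousLinearMap.id_apply, ContinuousLinearMap.proj_apply, smul_eq_mul,
      _root_.map_smul]
    rw [Finset.sum_add_distrib]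
    have hA : ∑ i, Apot B i c 0 * (Pi.single j 1 : Fin d → ℝ) i = Apot B j c 0 := by
      rw [Finset.sum_eq_single_of_mem j (Finset.mem_univ j)
        (fun b _ hb => by simp [Pi.single_eq_of_ne hb])]
      simp
    have e4 : t * (Da B j c) (x - y)
        = ∑ i, t * ((x i - y i) * (Da B j c) (Pi.single i 1)) := by
      rw [clm_eval (Da B j c) (x - y), Finset.mul_sum]
      exact Finset.sum_congr rfl fun i _ => by rw [Pi.sub_apply]
    have hB : ∑ i, (x i - y i) * (t * (Da B i c) (Pi.single j 1))
        = (∑ i, t * ((x i - y i) * (Da B j c) (Pi.single i 1)))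
          + ∑ i, t * ((x i - y i) * B j i c) := by
      rw [← Finset.sum_add_distrib]
      refine Finset.sum_congr rfl fun i _ => ?_
      have hcurl := Da_curl B hsmooth hanti hclosed i j c
      have hb := hanti i j c
      linear_combination ((x i - y i) * t) * hcurl - ((x i - y i) * t) * hb
    rw [hA, hB, e4]
    ring
  rw [intervalIntegral.integral_congr (g := fun t =>
      (Apot B j (y + t • (x - y)) 0 + t * (Da B j (y + t • (x - y))) (x - y))
        + ∑ i, t * ((x i - y i) * B j i (y + t • (x - y)))) (fun t _ => hpt t)]
  have hc_cont : Continuous fun t : ℝ => y + t • (x - y) :=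
    continuous_const.add (continuous_id.smul continuous_const)
  have h1cont : Continuous fun t : ℝ =>
      Apot B j (y + t • (x - y)) 0 + t * (Da B j (y + t • (x - y))) (x - y) :=
    ((haCont B hsmooth j).comp hc_cont).add
      (continuous_id.mul (((hDacont' B hsmooth j).comp hc_cont).clm_apply continuous_const))
  have h2cont : ∀ i : Fin d, Continuous fun t : ℝ =>
      t * ((x i - y i) * B j i (y + t • (x - y))) := fun i =>
    continuous_id.mul (continuous_const.mul ((hBc B hsmooth j i).comp hc_cont))
  rw [intervalIntegral.integral_add (h1cont.intervalIntegrable 0 1)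
    ((continuous_finset_sum _ fun i _ => h2cont i).intervalIntegrable 0 1)]
  have hftc : (∫ t in (0:ℝ)..1,
      (Apot B j (y + t • (x - y)) 0 + t * (Da B j (y + t • (x - y))) (x - y)))
      = Apot B j x 0 := by
    have hd : ∀ t ∈ Set.uIcc (0:ℝ) 1, HasDerivAt
        (fun u : ℝ => u * Apot B j (y + u • (x - y)) 0)
        (Apot B j (y + t • (x - y)) 0 + t * (Da B j (y + t • (x - y))) (x - y)) t := by
      intro t _
      have hin : HasDerivAt (fun u : ℝ => y + u • (x - y)) (x - y) t := by
        simpa using ((hasDerivAt_id t).smul_const (x - y)).const_add y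
      have h2 : HasDerivAt (fun u : ℝ => Apot B j (y + u • (x - y)) 0)
          ((Da B j (y + t • (x - y))) (x - y)) t :=
        by have h := (hDa B hsmooth j (y + t • (x - y))).comp_hasDerivAt t hin; exact h
      simpa using (hasDerivAt_id t).fun_mul h2
    rw [intervalIntegral.integral_eq_sub_of_hasDerivAt hd (h1cont.intervalIntegrable 0 1)]
    have hx1 : y + (1:ℝ) • (x - y) = x := by rw [one_smul]; abel
    rw [hx1]
    ring
  have hsec : (∫ t in (0:ℝ)..1, ∑ i, t * ((x i - y i) * B j i (y + t • (x - y))))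
      = -Apot B j x y := by
    rw [intervalIntegral.integral_finset_sum
      (fun i _ => (h2cont i).intervalIntegrable 0 1)]
    simp only [Apot, neg_neg]
    refine Finset.sum_congr rfl fun i _ => ?_
    refine intervalIntegral.integral_congr fun t _ => ?_
    ring
  rw [hftc, hsec]
  ring
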